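/- The set of quantum combs is convex and compact: for finite-dimensional complex Hilbert spaces H_0, …, H_{2N+1}, the set of positive semidefinite operators R on ⊗_{j=0}^{2N+1} H_j for which there exist operators R^{(n)} on ⊗_{j=0}^{2n+1} H_j with R^{(N)} = R, R^{(-1)} = 1, and Tr_{2n+1}[R^{(n)}] = I_{2n} ⊗ R^{(n-1)} for all n = 0, …, N, is a convex and compact subset of the (finite-dimensional) real vector space of Hermitian operators on ⊗_{j=0}^{2N+1} H_j. -/

import Mathlib

open Matrix Kronecker ComplexOrder

/-- The partial trace over the last tensor factor of a matrix indexed by dependent tuples: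
`(Tr_last M)_{p,q} = Σ_x M_{(p,x),(q,x)}`. -/
noncomputable def trLast {k : ℕ} {α : Fin (k + 1) → Type*} [∀ j, Fintype (α j)]
    (M : Matrix (∀ j, α j) (∀ j, α j) ℂ) :
    Matrix (∀ j : Fin k, α j.castSucc) (∀ j : Fin k, α j.castSucc) ℂ :=
  fun p q => ∑ x : α (Fin.last k), M (Fin.snoc p x) (Fin.snoc q x)

/-- The set of quantum combs with `N` slots on the spaces `H_0, …, H_{2N+1}`
(`H_j = ℂ^{d j}`, even indices inputs, odd indices outputs): the positive semidefinite
operators `R` on `⊗_{j=0}^{2N+1} H_j` admitting a chain of operators `R^{(n)}` (encoded as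
`T (n+1) = R^{(n)}`) with `R^{(N)} = R`, `R^{(-1)} = 1` and the recursive normalization
constraints `Tr_{2n+1}[R^{(n)}] = I_{2n} ⊗ R^{(n-1)}` for all `n = 0, …, N`. -/
noncomputable def combSet (N : ℕ) (d : Fin (2*N+2) → ℕ) :
    Set (Matrix (∀ j, Fin (d j)) (∀ j, Fin (d j)) ℂ) :=
  {R | R.PosSemidef ∧
    ∃ T : ∀ n : Fin (N+2), Matrix (∀ j : Fin (2*n.val), Fin (d (j.castLE (by omega))))
                                  (∀ j : Fin (2*n.val), Fin (d (j.castLE (by omega)))) ℂ,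
      T 0 = 1 ∧ T (Fin.last (N+1)) = R ∧
      ∀ n : Fin (N+1),
        trLast (T n.succ) = fun p q =>
          (if p (Fin.last (2*n.val)) = q (Fin.last (2*n.val)) then (1:ℂ) else 0) *
            T n.castSucc (fun j => p j.castSucc) (fun j => q j.castSucc)}

/-!
The comb constraints are linear in the chain `(R^{(n)})ₙ`, so the pairs `(R, (R^{(n)})ₙ)` form a
closed convex set whose projection to the first coordinate is the set of combs. Taking traces in
the constraints gives `Tr R^{(n)} = ∏_{m ≤ n} d_{2m}`, which bounds the entries of the positive
matrix `R` (`|R_{ij}|² ≤ R_{ii} R_{jj}`). The intermediate `R^{(n)}` need not be positive, but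
`R^{(n-1)}` is a diagonal block of `I ⊗ R^{(n-1)} = Tr_{2n+1} R^{(n)}`, so its entries are bounded
by `d_{2n+1}` times those of `R^{(n)}`. Hence the set of pairs is compact, and so is its
projection. If some `d_j = 0` the ambient space is a single point.
-/

namespace Matrix

variable {n 𝕜 : Type*} [RCLike 𝕜]

lemma PosSemidef.norm_apply_sq_le {A : Matrix n n 𝕜} (hA : A.PosSemidef) (i j : n) :
    ‖A i j‖ ^ 2 ≤ RCLike.re (A i i) * RCLike.re (A j j) := by
  have hdet := (hA.submatrix ![i, j]).det_nonneg
  have hji : A j i = star (A i j) := by simpa using (hA.isHermitian.apply j i).symm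
  have hii := RCLike.nonneg_iff.mp (hA.diag_nonneg (i := i))
  have hjj := RCLike.nonneg_iff.mp (hA.diag_nonneg (i := j))
  rw [det_fin_two, RCLike.nonneg_iff] at hdet
  simpa [hji, RCLike.mul_re, hii.2, hjj.2, RCLike.star_def, RCLike.mul_conj] using hdet

variable [Fintype n]

lemma PosSemidef.re_apply_le_re_trace {A : Matrix n n 𝕜} (hA : A.PosSemidef) (i : n) :
    RCLike.re (A i i) ≤ RCLike.re A.trace := by
  rw [trace, map_sum]
  exact Finset.single_le_sum (f := fun j => RCLike.re (A j j))
    (fun j _ => (RCLike.nonneg_iff.mp hA.diag_nonneg).1) (Finset.mem_univ i)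

lemma PosSemidef.norm_apply_le_re_trace {A : Matrix n n 𝕜} (hA : A.PosSemidef) (i j : n) :
    ‖A i j‖ ≤ RCLike.re A.trace := by
  have hi := hA.re_apply_le_re_trace i
  have hj := hA.re_apply_le_re_trace j
  have hj0 := (RCLike.nonneg_iff.mp (hA.diag_nonneg (i := j))).1
  have ht0 := (RCLike.nonneg_iff.mp (hA.diag_nonneg (i := i))).1.trans hi
  refine (pow_le_pow_iff_left₀ (norm_nonneg _) ht0 two_ne_zero).1 ?_
  calc ‖A i j‖ ^ 2 ≤ RCLike.re (A i i) * RCLike.re (A j j) := hA.norm_apply_sq_le i j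
    _ ≤ RCLike.re A.trace ^ 2 := sq (RCLike.re A.trace) ▸ mul_le_mul hi hj hj0 ht0

lemma isClosed_setOf_posSemidef : IsClosed {A : Matrix n n 𝕜 | A.PosSemidef} := by
  simp only [posSemidef_iff_dotProduct_mulVec, Set.ofPred_and, Set.ofPred_forall]
  exact (isClosed_eq continuous_id.matrix_conjTranspose continuous_id).inter <|
    isClosed_iInter fun x => isClosed_Ici.preimage <|
      continuous_const.dotProduct (continuous_id.matrix_mulVec continuous_const)

omit [Fintype n] in
lemma isCompact_setOf_forall_norm_apply_le {m : Type*} [Finite m] [Finite n] (C : ℝ) :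
    IsCompact {A : Matrix m n 𝕜 | ∀ i j, ‖A i j‖ ≤ C} := by
  have : {A : Matrix m n 𝕜 | ∀ i j, ‖A i j‖ ≤ C} =
      Set.univ.pi fun _ => Set.univ.pi fun _ => Metric.closedBall 0 C := by
    ext A
    exact ⟨fun h i _ j _ => mem_closedBall_zero_iff.2 (h i j),
      fun h i j => mem_closedBall_zero_iff.1 (h i trivial j trivial)⟩
  rw [this]
  exact isCompact_univ_pi fun _ => isCompact_univ_pi fun _ => isCompact_closedBall _ _

end Matrix

section PartialTrace

variable {k : ℕ} {α : Fin (k + 1) → Type*}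

def kronOneLast [∀ j, DecidableEq (α j)]
    (A : Matrix (∀ j : Fin k, α j.castSucc) (∀ j : Fin k, α j.castSucc) ℂ) :
    Matrix (∀ j, α j) (∀ j, α j) ℂ :=
  fun p q => (if p (Fin.last k) = q (Fin.last k) then 1 else 0) * A (Fin.init p) (Fin.init q)

section KronOneLast

variable [∀ j, DecidableEq (α j)]

@[simp]
lemma kronOneLast_snoc_snoc (A : Matrix (∀ j : Fin k, α j.castSucc) (∀ j : Fin k, α j.castSucc) ℂ)
    (p q : ∀ j : Fin k, α j.castSucc) (x : α (Fin.last k)) :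
    kronOneLast A (Fin.snoc p x) (Fin.snoc q x) = A p q := by
  simp [kronOneLast, Fin.init_snoc]

lemma continuous_kronOneLast : Continuous (kronOneLast (α := α)) :=
  continuous_pi fun _ => continuous_pi fun _ =>
    continuous_const.mul (continuous_id.matrix_elem _ _)

lemma kronOneLast_add (A A' : Matrix (∀ j : Fin k, α j.castSucc) (∀ j : Fin k, α j.castSucc) ℂ) :
    kronOneLast (A + A') = kronOneLast A + kronOneLast A' := by
  ext p q
  simp [kronOneLast, mul_add]

lemma kronOneLast_smul {S : Type*} [SMul S ℂ] [SMulCommClass S ℂ ℂ] (a : S) (A : Matrix (∀ j : Fin k, α j.castSucc) (∀ j : Fin k, α j.castSucc) ℂ) :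
    kronOneLast (a • A) = a • kronOneLast A := by
  ext p q
  simp [kronOneLast, mul_smul_comm]

end KronOneLast

variable [∀ j, Fintype (α j)]

lemma sum_pi_eq_sum_snoc {M : Type*} [AddCommMonoid M] (f : (∀ j, α j) → M) :
    ∑ p, f p = ∑ x : α (Fin.last k), ∑ p : ∀ j : Fin k, α j.castSucc, f (Fin.snoc p x) := by
  rw [← (Fin.snocEquiv α).sum_comp, Fintype.sum_prod_type]
  rfl

lemma trace_kronOneLast [∀ j, DecidableEq (α j)]
    (A : Matrix (∀ j : Fin k, α j.castSucc) (∀ j : Fin k, α j.castSucc) ℂ) :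
    (kronOneLast A).trace = Fintype.card (α (Fin.last k)) * A.trace := by
  simp [trace, sum_pi_eq_sum_snoc (fun p => kronOneLast A p p)]

lemma trace_trLast (M : Matrix (∀ j, α j) (∀ j, α j) ℂ) : (trLast M).trace = M.trace := by
  rw [trace, trace, sum_pi_eq_sum_snoc, Finset.sum_comm]
  rfl

lemma norm_trLast_apply_le {M : Matrix (∀ j, α j) (∀ j, α j) ℂ} {C : ℝ}
    (hM : ∀ p q, ‖M p q‖ ≤ C) (p q : ∀ j : Fin k, α j.castSucc) :
    ‖trLast M p q‖ ≤ Fintype.card (α (Fin.last k)) * C := by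
  simpa [trLast] using norm_sum_le_of_le Finset.univ fun x _ => hM (Fin.snoc p x) (Fin.snoc q x)

lemma continuous_trLast : Continuous (trLast (α := α)) :=
  continuous_pi fun _ => continuous_pi fun _ =>
    continuous_finsetSum _ fun _ _ => continuous_id.matrix_elem _ _

lemma trLast_add (M M' : Matrix (∀ j, α j) (∀ j, α j) ℂ) :
    trLast (M + M') = trLast M + trLast M' := by
  ext p q
  simp [trLast, Finset.sum_add_distrib]

lemma trLast_smul {S : Type*} [DistribSMul S ℂ] (a : S) (M : Matrix (∀ j, α j) (∀ j, α j) ℂ) :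
    trLast (a • M) = a • trLast M := by
  ext p q
  simp [trLast, Finset.smul_sum]

end PartialTrace

namespace Comb

variable (N : ℕ) (d : Fin (2 * N + 2) → ℕ)

abbrev Index (n : Fin (N + 2)) : Type := ∀ j : Fin (2 * n.val), Fin (d (j.castLE (by omega)))

abbrev Chain : Type := ∀ n : Fin (N + 2), Matrix (Index N d n) (Index N d n) ℂ

def pairs : Set (Matrix (∀ j, Fin (d j)) (∀ j, Fin (d j)) ℂ × Chain N d) :=
  {z | z.1.PosSemidef ∧ z.2 0 = 1 ∧ z.2 (Fin.last (N + 1)) = z.1 ∧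
    ∀ n : Fin (N + 1), trLast (z.2 n.succ) = kronOneLast (z.2 n.castSucc)}

lemma combSet_eq_image_fst_pairs : combSet N d = Prod.fst '' pairs N d := by
  ext R
  constructor
  · rintro ⟨hR, T, h0, hN, hT⟩
    exact ⟨(R, T), ⟨hR, h0, hN, hT⟩, rfl⟩
  · rintro ⟨⟨R, T⟩, ⟨hR, h0, hN, hT⟩, rfl⟩
    exact ⟨hR, T, h0, hN, hT⟩

lemma convex_pairs : Convex ℝ (pairs N d) := by
  rintro z ⟨hR, h0, hN, hT⟩ z' ⟨hR', h0', hN', hT'⟩ a b ha hb hab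
  refine ⟨(hR.smul ha).add (hR'.smul hb), ?_, ?_, fun n => ?_⟩
  · simp [h0, h0', ← add_smul, hab]
  · simp [hN, hN']
  · simp [trLast_add, trLast_smul, kronOneLast_add, kronOneLast_smul, hT n, hT' n]

lemma isClosed_pairs : IsClosed (pairs N d) := by
  have hT : ∀ n, Continuous fun z : Matrix (∀ j, Fin (d j)) (∀ j, Fin (d j)) ℂ × Chain N d => z.2 n :=
    fun n => (continuous_apply n).comp continuous_snd
  simp only [pairs, Set.ofPred_and, Set.ofPred_forall]
  exact (isClosed_setOf_posSemidef.preimage continuous_fst).inter <|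
    (isClosed_eq (hT 0) continuous_const).inter <|
    (isClosed_eq (hT (Fin.last (N + 1))) continuous_fst).inter <|
    isClosed_iInter fun n => isClosed_eq (continuous_trLast.comp (hT _))
      (continuous_kronOneLast.comp (hT _))

variable {N d}

lemma trace_of_mem_pairs {z} (hz : z ∈ pairs N d) (n : Fin (N + 2)) :
    (z.2 n).trace = ∏ m : Fin n, (d ⟨2 * m, by omega⟩ : ℂ) := by
  induction n using Fin.induction with
  | zero =>
    have hcard : Fintype.card (Index N d 0) = 1 :=
      Fintype.card_eq_one_iff.2 ⟨fun j => j.elim0, fun _ => funext fun j => j.elim0⟩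
    rw [hz.2.1, trace_one, hcard, Nat.cast_one]
    exact (Fin.prod_univ_zero _).symm
  | succ n ih =>
    rw [← trace_trLast, hz.2.2.2 n, trace_kronOneLast, ih]
    show _ = ∏ m : Fin (n + 1), (d ⟨2 * m, by omega⟩ : ℂ)
    rw [Fin.prod_univ_castSucc, mul_comm, Fintype.card_fin]
    rfl

end Comb

namespace Comb
variable {N : ℕ} {d : Fin (2 * N + 2) → ℕ}

lemma exists_norm_le_of_mem_pairs (hd : ∀ j, 0 < d j) (n : Fin (N + 2)) :
    ∃ C : ℝ, ∀ z ∈ pairs N d, ∀ p q, ‖z.2 n p q‖ ≤ C := by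
  induction n using Fin.reverseInduction with
  | last =>
    refine ⟨RCLike.re (∏ m : Fin (N + 1), (d ⟨2 * m, by omega⟩ : ℂ)), fun z hz p q => ?_⟩
    have hpsd : (z.2 (Fin.last (N + 1))).PosSemidef := hz.2.2.1 ▸ hz.1
    simpa [trace_of_mem_pairs hz] using hpsd.norm_apply_le_re_trace p q
  | cast n ih =>
    obtain ⟨C, hC⟩ := ih
    refine ⟨d ⟨2 * n + 1, by omega⟩ * C, fun z hz p q => ?_⟩
    have x₀ : Fin (d ⟨2 * n, by omega⟩) := ⟨0, hd _⟩
    have := norm_trLast_apply_le (hC z hz) (Fin.snoc p x₀) (Fin.snoc q x₀)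
    rwa [hz.2.2.2 n, kronOneLast_snoc_snoc, Fintype.card_fin] at this

lemma isCompact_pairs (hd : ∀ j, 0 < d j) : IsCompact (pairs N d) := by
  choose C hC using exists_norm_le_of_mem_pairs hd
  refine ((isCompact_setOf_forall_norm_apply_le (C (Fin.last (N + 1)))).prod
    (isCompact_univ_pi fun n => isCompact_setOf_forall_norm_apply_le (C n))).of_isClosed_subset
    (isClosed_pairs N d) fun z hz => ⟨hz.2.2.1 ▸ hC (Fin.last (N + 1)) z hz, fun n _ => hC n z hz⟩

end Comb

lemma isCompact_combSet (N : ℕ) (d : Fin (2 * N + 2) → ℕ) : IsCompact (combSet N d) := by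
  by_cases hd : ∀ j, 0 < d j
  · rw [Comb.combSet_eq_image_fst_pairs]
    exact (Comb.isCompact_pairs hd).image continuous_fst
  · obtain ⟨j, hj⟩ := not_forall.1 hd
    have : IsEmpty (∀ j, Fin (d j)) := ⟨fun p => hj (Fin.pos_iff_nonempty.2 ⟨p j⟩)⟩
    exact Set.subsingleton_of_subsingleton.isCompact

lemma convex_combSet (N : ℕ) (d : Fin (2 * N + 2) → ℕ) : Convex ℝ (combSet N d) := by
  rw [Comb.combSet_eq_image_fst_pairs]
  exact (Comb.convex_pairs N d).linear_image (LinearMap.fst ℝ _ _)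

/-- The set of quantum combs is convex and compact: for finite-dimensional
complex Hilbert spaces `H_0, …, H_{2N+1}`, the set of positive semidefinite operators `R` on
`⊗_{j=0}^{2N+1} H_j` satisfying the recursive comb normalization constraints is a convex and
compact subset of the (finite-dimensional, real) space of Hermitian operators on
`⊗_{j=0}^{2N+1} H_j`  (every member of the set is indeed Hermitian). -/
theorem combSet_convex_compact (N : ℕ) (d : Fin (2*N+2) → ℕ) :
    Convex ℝ (combSet N d) ∧ IsCompact (combSet N d) ∧
      ∀ R ∈ combSet N d, R.IsHermitian :=
  ⟨convex_combSet N d, isCompact_combSet N d, fun _ hR => hR.1.isHermitian⟩
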